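/- Let σ ∈ (0,1), and let κ_uv, κ_H, κ_v, τ_min, ζ be positive reals. Define κ̂ := min{1, 1/((1+κ_uv)κ_v κ_H²)} and κ̃ := ¼ ζ κ_uv κ_v κ̂. Let g, u, v, d ∈ ℝⁿ with d = u + v and u ⟂ v, let y ∈ ℝᵐ, c ∈ ℝᵐ, τ ≥ τ_min, and let H be a real n×n matrix with operator norm ‖H‖ ≤ κ_H. Assume: (i) H d = −(g + Jᵀy) and J d = −c for some m×n matrix J; (ii) ‖v‖² ≤ κ_v‖c‖; (iii) if ‖u‖² ≥ κ_uv‖v‖² then dᵀHd ≥ ½ ζ ‖u‖²; (iv) Δq := −τ(gᵀd + ½·max{dᵀHd,0}) + ‖c‖₁ satisfies Δq ≥ ½ τ max{dᵀHd, 0} + σ‖c‖₁. Then for every ε ∈ (0,1): if ‖g + Jᵀy‖ > ε or √(‖c‖₁) > ε, then Δq ≥ min{σκ̂, τ_min κ̃} · ε². -/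

import Mathlib

open Matrix

/-- The Euclidean norm of a vector in `ℝⁿ`. -/
noncomputable def euclidNorm {k : ℕ} (x : Fin k → ℝ) : ℝ := Real.sqrt (∑ i, (x i)^2)

/-- The ℓ₁-norm of a vector in `ℝᵐ`. -/
def l1norm {k : ℕ} (x : Fin k → ℝ) : ℝ := ∑ i, |x i|

lemma enorm_nonneg' {k : ℕ} (x : Fin k → ℝ) : 0 ≤ euclidNorm x := Real.sqrt_nonneg _

lemma enorm_sq' {k : ℕ} (x : Fin k → ℝ) : (euclidNorm x)^2 = ∑ i, (x i)^2 := by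
  unfold euclidNorm
  exact Real.sq_sqrt (by positivity)

lemma l1norm_nonneg' {k : ℕ} (x : Fin k → ℝ) : 0 ≤ l1norm x := by
  unfold l1norm; positivity

lemma enorm_neg' {k : ℕ} (x : Fin k → ℝ) : euclidNorm (-x) = euclidNorm x := by
  unfold euclidNorm
  congr 1
  apply Finset.sum_congr rfl
  intro i _
  simp [neg_sq]

lemma enorm_le_l1 {k : ℕ} (x : Fin k → ℝ) : euclidNorm x ≤ l1norm x := by
  have h : (∑ i, (x i)^2) ≤ (l1norm x)^2 := by
    have hS : ∀ i, |x i| ≤ l1norm x := by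
      intro i
      exact Finset.single_le_sum (f := fun j => |x j|)
        (fun j _ => abs_nonneg _) (Finset.mem_univ i)
    calc ∑ i, (x i)^2 = ∑ i, |x i| * |x i| := by
          apply Finset.sum_congr rfl; intro i _
          rw [abs_mul_abs_self]; ring
      _ ≤ ∑ i, |x i| * l1norm x :=
          Finset.sum_le_sum (fun i _ => mul_le_mul_of_nonneg_left (hS i) (abs_nonneg _))
      _ = l1norm x * l1norm x := by rw [← Finset.sum_mul]; rfl
      _ = (l1norm x)^2 := by ring
  have h2 := Real.sqrt_le_sqrt h
  unfold euclidNorm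
  calc Real.sqrt (∑ i, (x i)^2) ≤ Real.sqrt ((l1norm x)^2) := h2
    _ = l1norm x := Real.sqrt_sq (l1norm_nonneg' x)

lemma pythag {k : ℕ} (u v : Fin k → ℝ) (h : u ⬝ᵥ v = 0) :
    (euclidNorm (u + v))^2 = (euclidNorm u)^2 + (euclidNorm v)^2 := by
  have h' : ∑ i, u i * v i = 0 := h
  rw [enorm_sq', enorm_sq', enorm_sq']
  have he : ∀ i : Fin k, ((u + v) i)^2 = u i ^2 + v i ^2 + 2 * (u i * v i) := by
    intro i; simp only [Pi.add_apply]; ring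
  rw [Finset.sum_congr rfl (fun i _ => he i)]
  rw [Finset.sum_add_distrib, Finset.sum_add_distrib, ← Finset.mul_sum, h']
  ring

/-- Lemma A.1: if the KKT residual `‖g + Jᵀy‖ > ε` or the constraint violation
satisfies `√‖c‖₁ > ε`, then the model reduction `Δq` is at least
`min{σ κ̂, τ_min κ̃} ε²`, where `κ̂ = min{1, 1/((1+κ_uv)κ_v κ_H²)}` and
`κ̃ = ¼ ζ κ_uv κ_v κ̂`.  The hypothesis `hHnorm` states that the operator norm of
`H` is at most `κ_H`. -/
theorem stmt_14 (n m : ℕ) (σ κuv κH κv τmin ζ : ℝ)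
    (hσ : σ ∈ Set.Ioo (0:ℝ) 1) (hκuv : 0 < κuv) (hκH : 0 < κH)
    (hκv : 0 < κv) (hτmin : 0 < τmin) (hζ : 0 < ζ)
    (κhat κtilde : ℝ)
    (hκhat : κhat = min 1 (1 / ((1 + κuv) * κv * κH^2)))
    (hκtilde : κtilde = (1/4) * ζ * κuv * κv * κhat)
    (g u v d : Fin n → ℝ) (hd : d = u + v) (huv : u ⬝ᵥ v = 0)
    (y c : Fin m → ℝ) (τ : ℝ) (hτ : τmin ≤ τ)
    (H : Matrix (Fin n) (Fin n) ℝ)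
    (hHnorm : ∀ w : Fin n → ℝ, euclidNorm (H.mulVec w) ≤ κH * euclidNorm w)
    (J : Matrix (Fin m) (Fin n) ℝ)
    (hi1 : H.mulVec d = -(g + Jᵀ.mulVec y)) (hi2 : J.mulVec d = -c)
    (hii : (euclidNorm v)^2 ≤ κv * euclidNorm c)
    (hiii : κuv * (euclidNorm v)^2 ≤ (euclidNorm u)^2 →
      (1/2) * ζ * (euclidNorm u)^2 ≤ d ⬝ᵥ H.mulVec d)
    (Δq : ℝ)
    (hΔq : Δq = -(τ * (g ⬝ᵥ d + (1/2) * max (d ⬝ᵥ H.mulVec d) 0)) + l1norm c)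
    (hiv : (1/2) * τ * max (d ⬝ᵥ H.mulVec d) 0 + σ * l1norm c ≤ Δq) :
    ∀ ε ∈ Set.Ioo (0:ℝ) 1,
      (ε < euclidNorm (g + Jᵀ.mulVec y) ∨ ε < Real.sqrt (l1norm c)) →
      min (σ * κhat) (τmin * κtilde) * ε^2 ≤ Δq := by
  intro ε hε hcase
  obtain ⟨hε0, hε1⟩ := hε
  obtain ⟨hσ0, hσ1⟩ := hσ
  -- scalar abbreviations
  set q : ℝ := d ⬝ᵥ H.mulVec d with hq
  set M : ℝ := max q 0 with hM
  set U : ℝ := euclidNorm u with hU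
  set V : ℝ := euclidNorm v with hV
  set D : ℝ := euclidNorm d with hD
  set L : ℝ := l1norm c with hL
  set C : ℝ := euclidNorm c with hC
  set R : ℝ := euclidNorm (g + Jᵀ.mulVec y) with hR
  -- scalar facts extracted from the vector hypotheses
  have hL0 : 0 ≤ L := l1norm_nonneg' c
  have hM0 : 0 ≤ M := le_max_right _ _
  have hU0 : 0 ≤ U := enorm_nonneg' u
  have hV0 : 0 ≤ V := enorm_nonneg' v
  have hD0 : 0 ≤ D := enorm_nonneg' d
  have hRD : R ≤ κH * D := by
    have heq : R = euclidNorm (H.mulVec d) := by rw [hR, hi1, enorm_neg']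
    rw [heq, hD]; exact hHnorm d
  have hpyth : D^2 = U^2 + V^2 := by
    rw [hD, hU, hV, hd]; exact pythag u v huv
  have hCL : C ≤ L := by rw [hC, hL]; exact enorm_le_l1 c
  have hqM : q ≤ M := le_max_left _ _
  -- drop everything non-scalar
  clear_value q M U V D L C R
  clear hΔq hi1 hi2 hHnorm hd huv hq hM hU hV hD hL hC hR
  clear g u v d y c H J
  have hτ0 : 0 < τ := lt_of_lt_of_le hτmin hτ
  have hσL : 0 ≤ σ * L := mul_nonneg hσ0.le hL0
  have hτM : 0 ≤ (1/2) * τ * M := by positivity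
  -- bounds on κhat
  have hden : 0 < (1 + κuv) * κv * κH^2 := by positivity
  have hκhat1 : κhat ≤ 1 := hκhat ▸ min_le_left _ _
  have hκhat2 : κhat * ((1 + κuv) * κv * κH^2) ≤ 1 := by
    have h2 : κhat ≤ 1 / ((1 + κuv) * κv * κH^2) := hκhat ▸ min_le_right _ _
    calc κhat * ((1 + κuv) * κv * κH^2)
        ≤ (1 / ((1 + κuv) * κv * κH^2)) * ((1 + κuv) * κv * κH^2) :=
          mul_le_mul_of_nonneg_right h2 (le_of_lt hden)
      _ = 1 := by field_simp
  have hκhat0 : 0 < κhat := by rw [hκhat]; positivity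
  clear hκhat
  have hmin1 : min (σ * κhat) (τmin * κtilde) ≤ σ * κhat := min_le_left _ _
  have hmin2 : min (σ * κhat) (τmin * κtilde) ≤ τmin * κtilde := min_le_right _ _
  rcases hcase with h | h
  · -- KKT residual case
    have hεd : ε < κH * D := lt_of_lt_of_le h hRD
    have hεd2 : ε^2 < κH^2 * D^2 := by
      have h5 := mul_self_lt_mul_self hε0.le hεd
      nlinarith only [h5]
    by_cases hcase2 : κuv * V^2 ≤ U^2
    · -- subcase (a): u dominates
      have hdHd : (1/2) * ζ * U^2 ≤ q := hiii hcase2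
      have hmaxge : (1/2) * ζ * U^2 ≤ M := le_trans hdHd hqM
      have hud : κuv * D^2 ≤ (1 + κuv) * U^2 := by
        have e : κuv * D^2 = κuv * U^2 + κuv * V^2 := by rw [hpyth]; ring
        linarith only [e, hcase2]
      have hu2 : κuv * ε^2 ≤ (1 + κuv) * κH^2 * U^2 := by
        have p1 := mul_le_mul_of_nonneg_left hεd2.le hκuv.le
        have p2 := mul_le_mul_of_nonneg_left hud (sq_nonneg κH)
        linarith only [p1, p2]
      have a1 : κv * κhat * (κuv * ε^2) ≤ κv * κhat * ((1 + κuv) * κH^2 * U^2) :=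
        mul_le_mul_of_nonneg_left hu2 (by positivity)
      have a2 : κv * κhat * ((1 + κuv) * κH^2 * U^2) ≤ U^2 := by
        have h3 := mul_le_mul_of_nonneg_right hκhat2 (sq_nonneg U)
        linarith only [h3]
      have hκh : κuv * κv * κhat * ε^2 ≤ U^2 := by linarith only [a1, a2]
      have s1 : (1/2) * ζ * (κuv * κv * κhat * ε^2) ≤ (1/2) * ζ * U^2 :=
        mul_le_mul_of_nonneg_left hκh (by positivity)
      have s2 : (1/2) * ζ * (κuv * κv * κhat * ε^2) ≤ M := le_trans s1 hmaxge
      have s3 : τmin * ((1/2) * ζ * (κuv * κv * κhat * ε^2)) ≤ τ * M :=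
        mul_le_mul hτ s2 (by positivity) hτ0.le
      have hkey : τmin * κtilde * ε^2 ≤ (1/2) * τ * M := by
        rw [hκtilde]; linarith only [s3]
      calc min (σ * κhat) (τmin * κtilde) * ε^2 ≤ τmin * κtilde * ε^2 :=
            mul_le_mul_of_nonneg_right hmin2 (by positivity)
        _ ≤ (1/2) * τ * M := hkey
        _ ≤ Δq := by linarith only [hiv, hσL]
    · -- subcase (b): v dominates
      rw [not_le] at hcase2
      have hvd : D^2 ≤ (1 + κuv) * V^2 := by linarith only [hpyth, hcase2.le]
      have hVL : V^2 ≤ κv * L := by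
        have h6 := mul_le_mul_of_nonneg_left hCL hκv.le
        linarith only [hii, h6]
      have hdL : D^2 ≤ (1 + κuv) * κv * L := by
        have h7 := mul_le_mul_of_nonneg_left hVL (by positivity : (0:ℝ) ≤ 1 + κuv)
        linarith only [hvd, h7]
      have hεL : ε^2 ≤ (1 + κuv) * κv * κH^2 * L := by
        have h8 := mul_le_mul_of_nonneg_left hdL (sq_nonneg κH)
        linarith only [hεd2, h8]
      have hκL : κhat * ε^2 ≤ L := by
        have b1 := mul_le_mul_of_nonneg_left hεL hκhat0.le
        have b2 := mul_le_mul_of_nonneg_right hκhat2 hL0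
        linarith only [b1, b2]
      calc min (σ * κhat) (τmin * κtilde) * ε^2 ≤ σ * κhat * ε^2 :=
            mul_le_mul_of_nonneg_right hmin1 (by positivity)
        _ ≤ σ * L := by linarith only [mul_le_mul_of_nonneg_left hκL hσ0.le]
        _ ≤ Δq := by linarith only [hiv, hτM]
  · -- constraint-violation case
    have hεL : ε^2 < L := by
      have h4 := (Real.lt_sqrt (le_of_lt hε0)).mp h
      linarith only [h4]
    calc min (σ * κhat) (τmin * κtilde) * ε^2 ≤ σ * κhat * ε^2 :=
          mul_le_mul_of_nonneg_right hmin1 (by positivity)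
      _ ≤ σ * ε^2 := by
          have h9 := mul_le_mul_of_nonneg_right hκhat1 (mul_nonneg hσ0.le (sq_nonneg ε))
          linarith only [h9]
      _ ≤ σ * L := by linarith only [mul_le_mul_of_nonneg_left hεL.le hσ0.le]
      _ ≤ Δq := by linarith only [hiv, hτM]
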